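/- Let A : ℕ → ℕ be defined by A(0) = 1, A(1) = 2, and A(n) = 1 + C(A(n−2)+1, 2) + A(n−2)·(A(n−1) − A(n−2)) for n ≥ 2, and let F(m) denote the m-th Fibonacci number (F(0)=0, F(1)=1). Then there exist real constants K₁ > 0 and K₂ > 1 such that A(n)/(K₁·K₂^(((3√5−5)/2)·F(n+2))) tends to 1 as n → ∞. -/

import Mathlib

/-!
Write `b n = log (A n)`. The recurrence reads `2 A(n+2) = 2 A(n) A(n+1) - A(n)² + A(n) + 2`, so
`A (n + 2) / (A n * A (n + 1))` differs from `1` by at most `A n / A (n + 1)`, which tends to `0`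
because `A (n + 1) ≥ A (n - 1) * A n / 2`. Hence `b` satisfies the Fibonacci recurrence up to a
defect tending to `0`. The component `b (n + 1) - φ * b n` is then contracted by `ψ` and tends to
`0`, and so `b n - c * φ ^ n → 0` for some `c`, which is positive because `A` is unbounded. Since
`(3√5 - 5) / 2 = √5 / φ ^ 2`, Binet's formula shows that the exponent `(3√5 - 5) / 2 * F (n + 2)`
differs from `φ ^ n` by a multiple of `ψ ^ n`, so `K₁ = 1` and `K₂ = exp c` work.
-/

open Filter

def A : ℕ → ℕ
  | 0 => 1
  | 1 => 2
  | n + 2 => 1 + Nat.choose (A n + 1) 2 + A n * (A (n + 1) - A n)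

open Real Topology
open scoped goldenRatio

theorem tendsto_zero_of_forall_eq_mul_add {q : ℝ} (hq : |q| < 1) {x e : ℕ → ℝ}
    (hx : ∀ n, x (n + 1) = q * x n + e n) (he : Tendsto e atTop (𝓝 0)) :
    Tendsto x atTop (𝓝 0) := by
  rw [Metric.tendsto_atTop]
  intro ε hε
  have hq' : 0 < 1 - |q| := by linarith
  obtain ⟨N, hN⟩ := Metric.tendsto_atTop.1 he ((1 - |q|) * (ε / 2)) (by positivity)
  have hdecay : ∀ k, |x (N + k)| ≤ |q| ^ k * |x N| + ε / 2 := by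
    intro k
    induction k with
    | zero => simp only [add_zero, pow_zero, one_mul]; linarith
    | succ k ih =>
      have hek : |e (N + k)| < (1 - |q|) * (ε / 2) := by
        simpa using hN (N + k) (by omega)
      calc |x (N + (k + 1))| ≤ |q| * |x (N + k)| + |e (N + k)| := by
            rw [← add_assoc, hx, ← abs_mul]; exact abs_add_le _ _
        _ ≤ |q| ^ (k + 1) * |x N| + ε / 2 := by
            rw [pow_succ]; nlinarith [abs_nonneg q]
  have hpow : Tendsto (fun k => |q| ^ k * |x N|) atTop (𝓝 0) := by
    simpa using (tendsto_pow_atTop_nhds_zero_of_lt_one (abs_nonneg q) hq).mul_const |x N|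
  obtain ⟨K, hK⟩ := Metric.tendsto_atTop.1 hpow (ε / 2) (half_pos hε)
  refine ⟨N + K, fun n hn => ?_⟩
  obtain ⟨k, rfl⟩ := Nat.exists_eq_add_of_le (le_of_add_le_left hn)
  have := hK k (by omega)
  rw [Real.dist_eq, sub_zero, abs_of_nonneg (by positivity)] at this
  rw [Real.dist_eq, sub_zero]
  linarith [hdecay k]

theorem exists_tendsto_sub_mul_pow_of_forall_eq_mul_add {p : ℝ} (hp : 1 < p) {x e : ℕ → ℝ}
    (hx : ∀ n, x (n + 1) = p * x n + e n) (he : Tendsto e atTop (𝓝 0)) :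
    ∃ c, Tendsto (fun n => x n - c * p ^ n) atTop (𝓝 0) := by
  obtain ⟨C, hC⟩ := isBounded_iff_forall_norm_le.1 (Metric.isBounded_range_of_tendsto e he)
  have hp0 : 0 < p := zero_lt_one.trans hp
  have hgeom : Summable (fun k => C * (1 / p) ^ (k + 1)) :=
    ((summable_nat_add_iff 1).2 (summable_geometric_of_lt_one (by positivity)
      ((div_lt_one hp0).2 hp))).mul_left C
  have hbound : ∀ n k, ‖e (k + n) / p ^ (k + 1)‖ ≤ C * (1 / p) ^ (k + 1) := by
    intro n k
    rw [norm_div, norm_pow, Real.norm_of_nonneg hp0.le, one_div_pow, ← div_eq_mul_one_div]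
    exact div_le_div_of_nonneg_right (hC _ ⟨_, rfl⟩) (by positivity)
  have hsum : Summable (fun k => e k / p ^ (k + 1)) :=
    hgeom.of_norm_bounded (by simpa using hbound 0)
  have hpartial : ∀ n, x n = p ^ n * (x 0 + ∑ k ∈ Finset.range n, e k / p ^ (k + 1)) := by
    intro n
    induction n with
    | zero => simp
    | succ n ih =>
      rw [hx, ih, Finset.sum_range_succ]
      field_simp
      ring
  refine ⟨x 0 + ∑' k, e k / p ^ (k + 1), ?_⟩
  have htail : ∀ n, x n - (x 0 + ∑' k, e k / p ^ (k + 1)) * p ^ n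
      = -∑' k, e (k + n) / p ^ (k + 1) := by
    intro n
    have hshift : ∑' k, e (k + n) / p ^ (k + 1) = p ^ n * ∑' k, e (k + n) / p ^ (k + n + 1) := by
      rw [← tsum_mul_left]
      congr 1 with k
      rw [add_right_comm, pow_add p _ n]
      field_simp
    rw [hpartial, ← hsum.sum_add_tsum_nat_add n, hshift]
    ring
  simp_rw [htail]
  rw [← neg_zero, ← tsum_zero]
  refine (tendsto_tsum_of_dominated_convergence hgeom (fun k => ?_)
    (Eventually.of_forall hbound)).neg
  simpa [add_comm] using (he.comp (tendsto_add_atTop_nat k)).div_const (p ^ (k + 1))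

theorem abs_goldenConj_lt_one : |ψ| < 1 :=
  abs_lt.2 ⟨neg_one_lt_goldenConj, goldenConj_neg.trans one_pos⟩

theorem pos_of_tendsto_sub_mul_pow {b : ℕ → ℝ} {c p : ℝ} (hp : 0 < p)
    (hb : Tendsto b atTop atTop) (hc : Tendsto (fun n => b n - c * p ^ n) atTop (𝓝 0)) :
    0 < c := by
  by_contra! hc0
  obtain ⟨n, hsmall, hlarge⟩ :=
    ((hc.eventually (gt_mem_nhds one_pos)).and (hb.eventually_ge_atTop 1)).exists
  nlinarith [pow_pos hp n]

theorem tendsto_goldenRatio_pow_sub_mul_fib :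
    Tendsto (fun n : ℕ => φ ^ n - (3 * √5 - 5) / 2 * (Nat.fib (n + 2) : ℝ)) atTop (𝓝 0) := by
  have h5 : √5 * √5 = 5 := Real.mul_self_sqrt (by norm_num)
  have hscale : (3 * √5 - 5) / 2 * φ ^ 2 = √5 := by
    rw [goldenRatio_sq, goldenRatio]
    linear_combination (3 / 4 : ℝ) * h5
  have hform : ∀ n : ℕ, φ ^ n - (3 * √5 - 5) / 2 * (Nat.fib (n + 2) : ℝ)
      = (3 * √5 - 5) / 2 * ψ ^ 2 / √5 * ψ ^ n := by
    intro n
    have hsqrt : √5 ≠ 0 := by positivity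
    generalize (3 * √5 - 5) / 2 = c at hscale ⊢
    have hinv : √5 * (√5)⁻¹ = 1 := mul_inv_cancel₀ hsqrt
    rw [coe_fib_eq, pow_add, pow_add, div_eq_mul_inv, div_eq_mul_inv]
    linear_combination (-φ ^ n * (√5)⁻¹) * hscale - φ ^ n * hinv
  have hψ := (tendsto_pow_atTop_nhds_zero_of_abs_lt_one abs_goldenConj_lt_one).const_mul
      ((3 * √5 - 5) / 2 * ψ ^ 2 / √5)
  rw [mul_zero] at hψ
  exact hψ.congr fun n => (hform n).symm

theorem exists_tendsto_sub_mul_goldenRatio_pow {b : ℕ → ℝ}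
    (hb : Tendsto (fun n => b (n + 2) - b (n + 1) - b n) atTop (𝓝 0)) :
    ∃ c, Tendsto (fun n => b n - c * φ ^ n) atTop (𝓝 0) := by
  have hdefect : Tendsto (fun n => b (n + 1) - φ * b n) atTop (𝓝 0) := by
    refine tendsto_zero_of_forall_eq_mul_add abs_goldenConj_lt_one (fun n => ?_) hb
    rw [← one_sub_goldenRatio]
    linear_combination (-b n) * goldenRatio_sq
  exact exists_tendsto_sub_mul_pow_of_forall_eq_mul_add one_lt_goldenRatio
    (fun n => by ring) hdefect

theorem A_pos (n : ℕ) : 0 < A n := by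
  rcases n with _ | _ | n <;> simp only [A] <;> omega

theorem A_lt_A_succ (n : ℕ) : A n < A (n + 1) := by
  rcases n with _ | n
  · simp [A]
  · have hchoose : A n ≤ Nat.choose (A n + 1) 2 := by
      rw [Nat.choose_succ_succ', Nat.choose_one_right]; omega
    have hmul : A (n + 1) - A n ≤ A n * (A (n + 1) - A n) :=
      Nat.le_mul_of_pos_left _ (A_pos n)
    show A (n + 1) < 1 + Nat.choose (A n + 1) 2 + A n * (A (n + 1) - A n)
    omega

theorem tendsto_A_atTop : Tendsto A atTop atTop :=
  (strictMono_nat_of_lt_succ A_lt_A_succ).tendsto_atTop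

theorem two_mul_A_add_two (n : ℕ) :
    2 * (A (n + 2) : ℝ) = 2 * A n * A (n + 1) - A n ^ 2 + A n + 2 := by
  rw [A, Nat.cast_add, Nat.cast_add, Nat.cast_mul, Nat.cast_sub (A_lt_A_succ n).le,
    Nat.cast_choose_two]
  push_cast
  ring

theorem A_mul_A_succ_le (n : ℕ) : (A n * A (n + 1) : ℝ) ≤ 2 * A (n + 2) := by
  have hmono : (A n : ℝ) ≤ A (n + 1) := by exact_mod_cast (A_lt_A_succ n).le
  have hpos : (0 : ℝ) ≤ A n := Nat.cast_nonneg _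
  nlinarith [two_mul_A_add_two n]

theorem abs_A_div_sub_one_le (n : ℕ) :
    |A (n + 2) / (A n * A (n + 1) : ℝ) - 1| ≤ A n / A (n + 1) := by
  have ha : (1 : ℝ) ≤ A n := by exact_mod_cast A_pos n
  have hb : (0 : ℝ) < A (n + 1) := by exact_mod_cast A_pos _
  have hden : (0 : ℝ) < 2 * (A n * A (n + 1)) := by positivity
  have hnum : |2 + (A n : ℝ) - A n ^ 2| ≤ 2 * (A n : ℝ) ^ 2 :=
    abs_le.2 ⟨by nlinarith, by nlinarith⟩
  have hratio : A (n + 2) / (A n * A (n + 1) : ℝ) - 1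
      = (2 + A n - A n ^ 2) / (2 * (A n * A (n + 1))) := by
    field_simp
    linear_combination two_mul_A_add_two n
  rw [hratio, abs_div, abs_of_pos hden, div_le_div_iff₀ hden hb]
  nlinarith [mul_le_mul_of_nonneg_right hnum hb.le]

theorem tendsto_A_div_A_succ : Tendsto (fun n => (A n : ℝ) / A (n + 1)) atTop (𝓝 0) := by
  rw [← tendsto_add_atTop_iff_nat 1]
  have hinv : Tendsto (fun n => 2 / (A n : ℝ)) atTop (𝓝 0) :=
    (tendsto_natCast_atTop_atTop.comp tendsto_A_atTop).const_div_atTop 2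
  refine squeeze_zero (fun n => by positivity) (fun n => ?_) hinv
  have ha : (0 : ℝ) < A n := by exact_mod_cast A_pos n
  rw [div_le_div_iff₀ (by exact_mod_cast A_pos _) ha]
  linarith [A_mul_A_succ_le n]

theorem tendsto_log_A_add_two_sub : Tendsto
    (fun n => log (A (n + 2)) - log (A (n + 1)) - log (A n)) atTop (𝓝 0) := by
  have hratio : Tendsto (fun n => A (n + 2) / (A n * A (n + 1) : ℝ)) atTop (𝓝 1) :=
    tendsto_iff_norm_sub_tendsto_zero.2 <|
      squeeze_zero (fun _ => norm_nonneg _) abs_A_div_sub_one_le tendsto_A_div_A_succ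
  have hlog := (continuousAt_log one_ne_zero).tendsto.comp hratio
  rw [log_one] at hlog
  refine hlog.congr fun n => ?_
  have hpos : ∀ k, (A k : ℝ) ≠ 0 := fun k => Nat.cast_ne_zero.2 (A_pos k).ne'
  simp only [Function.comp_apply]
  rw [log_div (hpos _) (mul_ne_zero (hpos _) (hpos _)), log_mul (hpos _) (hpos _)]
  ring

theorem stmt_14 :
    ∃ K₁ K₂ : ℝ, 0 < K₁ ∧ 1 < K₂ ∧
      Tendsto (fun n : ℕ =>
          (A n : ℝ) /
            (K₁ * K₂ ^ (((3 * Real.sqrt 5 - 5) / 2) * (Nat.fib (n + 2) : ℝ))))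
        atTop (nhds 1) := by
  obtain ⟨c, hc⟩ :=
    exists_tendsto_sub_mul_goldenRatio_pow (b := fun n => log (A n)) tendsto_log_A_add_two_sub
  have hc0 : 0 < c := pos_of_tendsto_sub_mul_pow goldenRatio_pos
    (tendsto_log_atTop.comp (tendsto_natCast_atTop_atTop.comp tendsto_A_atTop)) hc
  refine ⟨1, exp c, one_pos, one_lt_exp_iff.2 hc0, ?_⟩
  have hexponent := hc.add (tendsto_goldenRatio_pow_sub_mul_fib.const_mul c)
  rw [mul_zero, add_zero] at hexponent
  have hexp := (continuous_exp.tendsto 0).comp hexponent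
  rw [exp_zero] at hexp
  refine hexp.congr fun n => ?_
  rw [Function.comp_apply, one_mul, rpow_def_of_pos (exp_pos c), log_exp,
    eq_div_iff (exp_pos _).ne', ← exp_add]
  ring_nf
  exact exp_log (Nat.cast_pos.2 (A_pos n))
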